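/- Suppose g_{ij}(x,y) = ζ(x,y)·a_{ij}(x,y) where each a_{ij} is rational in y and ζ is a positive function, and suppose F² = Σ g_{ij}yⁱyʲ, Φ is linear in y (rational), and ℓᵢ = (Σⱼ g_{ij}yʲ)/F, φᵢ functions of x only. Then the functions ĝ_{ij} defined by ĝ_{ij} = m(m+1)ζ(F²/Φ²)^m · â_{ij} with â_{ij} = (1/m)a_{ij} + ((2m+1)/(m+1))(Σ a_{rs}yʳyˢ/Φ²)φᵢφⱼ + 2(Σ_r a_{ri}yʳ)(Σ_k a_{kj}y^k)/(Σ a_{ms}y^m yˢ) - (2/Φ)Σ_r yʳ(φᵢa_{rj} + φⱼa_{ir}) have â_{ij} rational in y. In particular, if ζ is rational in y and m ∈ ℤ, then ĝ_{ij} is rational in y. -/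
import Mathlib


open Finset in
/-- `f : (Fin n → ℝ) → ℝ` is a rational function of `y` on the set `S`. -/
def RationalInY (n : ℕ) (S : Set (Fin n → ℝ)) (f : (Fin n → ℝ) → ℝ) : Prop :=
  ∃ p q : MvPolynomial (Fin n) ℝ, ∀ y ∈ S,
    MvPolynomial.eval y q ≠ 0 ∧ f y = MvPolynomial.eval y p / MvPolynomial.eval y q

namespace RationalInY

variable {n : ℕ} {S : Set (Fin n → ℝ)} {f g : (Fin n → ℝ) → ℝ}

theorem congr' (h : RationalInY n S g) (hfg : ∀ y ∈ S, f y = g y) :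
    RationalInY n S f := by
  obtain ⟨p, q, hpq⟩ := h
  exact ⟨p, q, fun y hy => ⟨(hpq y hy).1, (hfg y hy).trans (hpq y hy).2⟩⟩

theorem const (c : ℝ) : RationalInY n S (fun _ => c) :=
  ⟨MvPolynomial.C c, 1, fun y _ => by simp⟩

theorem coord (i : Fin n) : RationalInY n S (fun y => y i) :=
  ⟨MvPolynomial.X i, 1, fun y _ => by simp⟩

theorem add (hf : RationalInY n S f) (hg : RationalInY n S g) :
    RationalInY n S (fun y => f y + g y) := by
  obtain ⟨p1, q1, h1⟩ := hf; obtain ⟨p2, q2, h2⟩ := hg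
  refine ⟨p1 * q2 + p2 * q1, q1 * q2, fun y hy => ?_⟩
  obtain ⟨hq1, hf1⟩ := h1 y hy; obtain ⟨hq2, hf2⟩ := h2 y hy
  simp only [map_add, map_mul]
  refine ⟨mul_ne_zero hq1 hq2, ?_⟩
  rw [hf1, hf2]; field_simp

theorem mul (hf : RationalInY n S f) (hg : RationalInY n S g) :
    RationalInY n S (fun y => f y * g y) := by
  obtain ⟨p1, q1, h1⟩ := hf; obtain ⟨p2, q2, h2⟩ := hg
  refine ⟨p1 * p2, q1 * q2, fun y hy => ?_⟩
  obtain ⟨hq1, hf1⟩ := h1 y hy; obtain ⟨hq2, hf2⟩ := h2 y hy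
  simp only [map_mul]
  refine ⟨mul_ne_zero hq1 hq2, ?_⟩
  rw [hf1, hf2]; field_simp

theorem neg (hf : RationalInY n S f) : RationalInY n S (fun y => -f y) := by
  obtain ⟨p, q, h⟩ := hf
  refine ⟨-p, q, fun y hy => ?_⟩
  obtain ⟨hq, hf1⟩ := h y hy
  simp only [map_neg]
  exact ⟨hq, by rw [hf1, neg_div]⟩

theorem sub (hf : RationalInY n S f) (hg : RationalInY n S g) :
    RationalInY n S (fun y => f y - g y) :=
  (hf.add hg.neg).congr' fun y _ => by ring

theorem div (hf : RationalInY n S f) (hg : RationalInY n S g)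
    (hne : ∀ y ∈ S, g y ≠ 0) : RationalInY n S (fun y => f y / g y) := by
  obtain ⟨p1, q1, h1⟩ := hf; obtain ⟨p2, q2, h2⟩ := hg
  refine ⟨p1 * q2, q1 * p2, fun y hy => ?_⟩
  obtain ⟨hq1, hf1⟩ := h1 y hy; obtain ⟨hq2, hf2⟩ := h2 y hy
  have hp2 : MvPolynomial.eval y p2 ≠ 0 := by
    intro h0; apply hne y hy; rw [hf2, h0, zero_div]
  simp only [map_mul]
  refine ⟨mul_ne_zero hq1 hp2, ?_⟩
  rw [hf1, hf2]; field_simp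

theorem sum {ι : Type*} (s : Finset ι) (F : ι → (Fin n → ℝ) → ℝ)
    (h : ∀ i ∈ s, RationalInY n S (F i)) :
    RationalInY n S (fun y => ∑ i ∈ s, F i y) := by
  classical
  revert h
  refine Finset.induction_on s ?_ ?_
  · intro _; simpa using const (n := n) (S := S) 0
  · intro a s ha ih h
    have h1 := add (h a (Finset.mem_insert_self a s))
      (ih fun i hi => h i (Finset.mem_insert_of_mem hi))
    exact h1.congr' fun y _ => by rw [Finset.sum_insert ha]

theorem pow (hf : RationalInY n S f) (k : ℕ) :
    RationalInY n S (fun y => f y ^ k) := by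
  induction k with
  | zero => simpa using const (n := n) (S := S) 1
  | succ k ih => exact (mul hf ih).congr' fun y _ => by rw [pow_succ]; ring

theorem zpow (hf : RationalInY n S f) (hne : ∀ y ∈ S, f y ≠ 0) (k : ℤ) :
    RationalInY n S (fun y => f y ^ k) := by
  cases k with
  | ofNat k => exact (hf.pow k).congr' fun y _ => by simp
  | negSucc k =>
      have h1 : RationalInY n S (fun y => 1 / f y ^ (k + 1)) :=
        (const 1).div (hf.pow (k + 1)) fun y hy => pow_ne_zero _ (hne y hy)
      exact h1.congr' fun y _ => by rw [zpow_negSucc, inv_eq_one_div]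

end RationalInY

open Finset in
/-- the functions `â_{ij}` of the φ-concurrent generalized Kropina change
`ĝ_{ij} = m(m+1)ζ(F²/Φ²)^m â_{ij}` are rational in `y`; and if `ζ` is rational in `y`
and `m ∈ ℤ`, then the `ĝ_{ij}` are rational in `y`. -/
theorem kropina_change_preserves_rationality (n : ℕ) (S : Set (Fin n → ℝ))
    (ζ : (Fin n → ℝ) → ℝ) (a : Fin n → Fin n → (Fin n → ℝ) → ℝ) (φc : Fin n → ℝ)
    (m : ℝ) (hm : m ≠ 0) (hm1 : m ≠ -1)
    (ha : ∀ i j, RationalInY n S (a i j))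
    (hasymm : ∀ i j, a i j = a j i)
    (hζpos : ∀ y ∈ S, 0 < ζ y)
    (hΦpos : ∀ y ∈ S, 0 < ∑ t, φc t * y t)
    (hF2pos : ∀ y ∈ S, 0 < ζ y * ∑ r, ∑ s, a r s y * y r * y s) :
    (∀ i j, RationalInY n S (fun y =>
      (1 / m) * a i j y
        + ((2 * m + 1) / (m + 1)) *
            ((∑ r, ∑ s, a r s y * y r * y s) / (∑ t, φc t * y t) ^ 2) * φc i * φc j
        + 2 * (∑ r, a r i y * y r) * (∑ k, a k j y * y k) /
            (∑ r, ∑ s, a r s y * y r * y s)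
        - (2 / (∑ t, φc t * y t)) *
            (∑ r, y r * (φc i * a r j y + φc j * a i r y)))) ∧
    (RationalInY n S ζ → ∀ mz : ℤ, m = (mz : ℝ) →
      ∀ i j, RationalInY n S (fun y =>
        m * (m + 1) * ζ y *
          ((ζ y * ∑ r, ∑ s, a r s y * y r * y s) / (∑ t, φc t * y t) ^ 2) ^ m *
          ((1 / m) * a i j y
            + ((2 * m + 1) / (m + 1)) *
                ((∑ r, ∑ s, a r s y * y r * y s) / (∑ t, φc t * y t) ^ 2) * φc i * φc j
            + 2 * (∑ r, a r i y * y r) * (∑ k, a k j y * y k) /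
                (∑ r, ∑ s, a r s y * y r * y s)
            - (2 / (∑ t, φc t * y t)) *
                (∑ r, y r * (φc i * a r j y + φc j * a i r y))))) := by
  -- basic rational building blocks
  have hA_rat : RationalInY n S (fun y => ∑ r, ∑ s, a r s y * y r * y s) :=
    RationalInY.sum univ _ fun r _ =>
      RationalInY.sum univ _ fun s _ =>
        (((ha r s).mul (RationalInY.coord r)).mul (RationalInY.coord s))
  have hΦ_rat : RationalInY n S (fun y => ∑ t, φc t * y t) :=
    RationalInY.sum univ _ fun t _ =>
      (RationalInY.const (φc t)).mul (RationalInY.coord t)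
  have hΦne : ∀ y ∈ S, (∑ t, φc t * y t) ≠ 0 := fun y hy => ne_of_gt (hΦpos y hy)
  have hAne : ∀ y ∈ S, (∑ r, ∑ s, a r s y * y r * y s) ≠ 0 := by
    intro y hy h0
    have := hF2pos y hy
    rw [h0, mul_zero] at this
    exact lt_irrefl 0 this
  have hΦ2_rat : RationalInY n S (fun y => (∑ t, φc t * y t) ^ 2) := hΦ_rat.pow 2
  have hΦ2ne : ∀ y ∈ S, (∑ t, φc t * y t) ^ 2 ≠ 0 := fun y hy =>
    pow_ne_zero _ (hΦne y hy)
  have hB_rat : ∀ i, RationalInY n S (fun y => ∑ r, a r i y * y r) := fun i =>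
    RationalInY.sum univ _ fun r _ => (ha r i).mul (RationalInY.coord r)
  -- the â_{ij}
  have main : ∀ i j, RationalInY n S (fun y =>
      (1 / m) * a i j y
        + ((2 * m + 1) / (m + 1)) *
            ((∑ r, ∑ s, a r s y * y r * y s) / (∑ t, φc t * y t) ^ 2) * φc i * φc j
        + 2 * (∑ r, a r i y * y r) * (∑ k, a k j y * y k) /
            (∑ r, ∑ s, a r s y * y r * y s)
        - (2 / (∑ t, φc t * y t)) *
            (∑ r, y r * (φc i * a r j y + φc j * a i r y))) := by
    intro i j
    have t1 : RationalInY n S (fun y => (1 / m) * a i j y) :=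
      (RationalInY.const (1 / m)).mul (ha i j)
    have t2 : RationalInY n S (fun y =>
        ((2 * m + 1) / (m + 1)) *
          ((∑ r, ∑ s, a r s y * y r * y s) / (∑ t, φc t * y t) ^ 2) * φc i * φc j) :=
      (((RationalInY.const ((2 * m + 1) / (m + 1))).mul
        (hA_rat.div hΦ2_rat hΦ2ne)).mul (RationalInY.const (φc i))).mul
          (RationalInY.const (φc j))
    have t3 : RationalInY n S (fun y =>
        2 * (∑ r, a r i y * y r) * (∑ k, a k j y * y k) /
          (∑ r, ∑ s, a r s y * y r * y s)) :=
      (((RationalInY.const 2).mul (hB_rat i)).mul (hB_rat j)).div hA_rat hAne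
    have t4 : RationalInY n S (fun y =>
        (2 / (∑ t, φc t * y t)) *
          (∑ r, y r * (φc i * a r j y + φc j * a i r y))) :=
      ((RationalInY.const 2).div hΦ_rat hΦne).mul
        (RationalInY.sum univ _ fun r _ =>
          (RationalInY.coord r).mul
            (((RationalInY.const (φc i)).mul (ha r j)).add
              ((RationalInY.const (φc j)).mul (ha i r))))
    exact ((t1.add t2).add t3).sub t4
  refine ⟨main, ?_⟩
  intro hζ mz hmz i j
  have hX_rat : RationalInY n S (fun y =>
      (ζ y * ∑ r, ∑ s, a r s y * y r * y s) / (∑ t, φc t * y t) ^ 2) :=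
    (hζ.mul hA_rat).div hΦ2_rat hΦ2ne
  have hXne : ∀ y ∈ S,
      (ζ y * ∑ r, ∑ s, a r s y * y r * y s) / (∑ t, φc t * y t) ^ 2 ≠ 0 :=
    fun y hy => ne_of_gt (div_pos (hF2pos y hy)
      (pow_pos (hΦpos y hy) 2))
  have hfull : RationalInY n S (fun y =>
      (m * (m + 1) * ζ y *
        ((ζ y * ∑ r, ∑ s, a r s y * y r * y s) / (∑ t, φc t * y t) ^ 2) ^ mz) *
        ((1 / m) * a i j y
          + ((2 * m + 1) / (m + 1)) *
              ((∑ r, ∑ s, a r s y * y r * y s) / (∑ t, φc t * y t) ^ 2) * φc i * φc j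
          + 2 * (∑ r, a r i y * y r) * (∑ k, a k j y * y k) /
              (∑ r, ∑ s, a r s y * y r * y s)
          - (2 / (∑ t, φc t * y t)) *
              (∑ r, y r * (φc i * a r j y + φc j * a i r y)))) :=
    (((RationalInY.const (m * (m + 1))).mul hζ).mul
      (hX_rat.zpow hXne mz)).mul (main i j)
  refine hfull.congr' fun y hy => ?_
  rw [hmz, Real.rpow_intCast]
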